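/- There exist constants a₁ > 0, a₂ > 0 and E_γ > 0, independent of η (depending only on c, α and γ), such that for all η > E_γ: a₁ η^{(γ−1)/4} ≤ ‖f_η‖² ≤ a₂ η^{(γ−1)/4}. -/

import Mathlib

open Complex MeasureTheory

/-- The JWKB quasimode `Φ` of Davies for the complex harmonic oscillator:
`Φ(x₀ + s) = exp(-(Ψ₁ s + Ψ₂ s²/2 + Ψ₃ s³/3))` with `x₀ = α η^{1/2}`,
`Ψ₁ = i α η^{γ/2}`, `Ψ₂ = -i c η^{(1-γ)/2}`,
`Ψ₃ = -(i c/(2α)) η^{-γ/2}(1 + c η^{1-γ})`. -/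
noncomputable def Phi (c : ℂ) (α γ η : ℝ) (x : ℝ) : ℂ :=
  Complex.exp (-((Complex.I * (α : ℂ) * ((η ^ (γ / 2) : ℝ) : ℂ)) *
      ((x : ℂ) - ((α * η ^ ((1 : ℝ) / 2) : ℝ) : ℂ))
    + (-Complex.I * c * ((η ^ ((1 - γ) / 2) : ℝ) : ℂ)) *
      ((x : ℂ) - ((α * η ^ ((1 : ℝ) / 2) : ℝ) : ℂ)) ^ 2 / 2
    + (-Complex.I * c / (2 * (α : ℂ)) * ((η ^ (-(γ / 2)) : ℝ) : ℂ) *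
        (1 + c * ((η ^ (1 - γ) : ℝ) : ℂ))) *
      ((x : ℂ) - ((α * η ^ ((1 : ℝ) / 2) : ℝ) : ℂ)) ^ 3 / 3))

lemma re_calc (c : ℂ) (a b e d s α : ℝ) (hα : α ≠ 0) :
    (-((Complex.I * (α:ℂ) * (a:ℂ)) * (s:ℂ)
      + (-Complex.I * c * (b:ℂ)) * (s:ℂ)^2/2
      + (-Complex.I * c / (2*(α:ℂ)) * (e:ℂ) * (1 + c * (d:ℂ))) * (s:ℂ)^3/3)).re
    = -(c.im * b * s^2/2 + ((c.im + 2*c.re*c.im*d)/(2*α)) * e * s^3/3) := by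
  have h2 : (2*(α:ℂ)) = ((2*α : ℝ) : ℂ) := by push_cast; ring
  rw [h2, div_ofReal]
  simp [Complex.add_re, Complex.mul_re, Complex.mul_im, Complex.div_re, Complex.normSq,
    ← Complex.ofReal_pow]
  field_simp
  left; ring

lemma normPhi_sq (c : ℂ) (α γ η : ℝ) (hα : α ≠ 0) (x : ℝ) :
    ‖Phi c α γ η x‖ ^ 2 = Real.exp (-(c.im * η ^ ((1-γ)/2) * (x - α * η ^ ((1:ℝ)/2)) ^ 2
      + (2/3) * ((c.im + 2*c.re*c.im*η ^ (1-γ)) / (2*α) * η ^ (-(γ/2)))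
        * (x - α * η ^ ((1:ℝ)/2)) ^ 3)) := by
  have hs : (x:ℂ) - ((α * η ^ ((1:ℝ)/2) : ℝ):ℂ) = ((x - α * η ^ ((1:ℝ)/2) : ℝ):ℂ) := by
    push_cast; ring
  rw [Phi, hs, Complex.norm_exp, sq, ← Real.exp_add,
    re_calc c _ _ _ _ _ _ hα]
  congr 1
  ring

set_option maxHeartbeats 1000000 in
/-- Two-sided bound `a₁ η^{(γ-1)/4} ≤ ‖f_η‖² ≤ a₂ η^{(γ-1)/4}` for the truncated
quasimodes `f_η = g_η Φ`, valid for all `η` beyond some threshold `E_γ`,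
with constants independent of `η`. -/
theorem truncated_quasimode_norm_bounds (c : ℂ) (hre : 0 < c.re) (him : 0 < c.im)
    (α γ : ℝ) (hα : 0 < α) (hγ1 : 1 ≤ γ) (hγ3 : γ < 3)
    (q₁ q₂ : ℝ) (hq₁ : 0 < q₁) (hq₂ : 0 < q₂)
    (g : ℝ → ℝ → ℝ)
    (hg_smooth : ∀ η : ℝ, 0 < η → ContDiff ℝ (⊤ : ℕ∞) (g η))
    (hg_nonneg : ∀ η : ℝ, 0 < η → ∀ x : ℝ, 0 ≤ g η x)
    (hg_le_one : ∀ η : ℝ, 0 < η → ∀ x : ℝ, g η x ≤ 1)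
    (hg_one : ∀ η : ℝ, 0 < η → ∀ x : ℝ,
      |x - α * η ^ ((1 : ℝ) / 2)| < η ^ (γ / 6) → g η x = 1)
    (hg_zero : ∀ η : ℝ, 0 < η → ∀ x : ℝ,
      |x - α * η ^ ((1 : ℝ) / 2)| > 2 * η ^ (γ / 6) → g η x = 0)
    (hg_deriv : ∀ η : ℝ, 0 < η → ∀ x : ℝ, |deriv (g η) x| ≤ q₁ * η ^ (-(γ / 6)))
    (hg_deriv2 : ∀ η : ℝ, 0 < η → ∀ x : ℝ,
      |deriv (deriv (g η)) x| ≤ q₂ * η ^ (-2 * (γ / 6))) :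
    ∃ a₁ : ℝ, 0 < a₁ ∧ ∃ a₂ : ℝ, 0 < a₂ ∧ ∃ E : ℝ, 0 < E ∧ ∀ η : ℝ, E < η →
      a₁ * η ^ ((γ - 1) / 4) ≤ (∫ x : ℝ, ‖(g η x : ℂ) * Phi c α γ η x‖ ^ 2) ∧
      (∫ x : ℝ, ‖(g η x : ℂ) * Phi c α γ η x‖ ^ 2) ≤ a₂ * η ^ ((γ - 1) / 4) := by
  have hα' : α ≠ 0 := ne_of_gt hα
  set C0 : ℝ := (c.im + 2*c.re*c.im) / (2*α) with hC0def
  have hC0 : 0 < C0 := by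
    apply div_pos _ (by linarith)
    nlinarith
  set K : ℝ := (16/3) * C0 with hKdef
  have hK : 0 < K := by positivity
  refine ⟨2 * Real.exp (-(c.im + K)), by positivity,
    Real.exp K * Real.sqrt (Real.pi / c.im), ?_, 1, one_pos, ?_⟩
  · have : 0 < Real.pi / c.im := div_pos Real.pi_pos him
    positivity
  intro η hη1
  have hη0 : 0 < η := lt_trans one_pos hη1
  set x₀ : ℝ := α * η ^ ((1:ℝ)/2) with hx₀def
  set b : ℝ := c.im * η ^ ((1-γ)/2) with hbdef
  have hb : 0 < b := mul_pos him (Real.rpow_pos_of_pos hη0 _)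
  set R : ℝ := (c.im + 2*c.re*c.im*η ^ (1-γ)) / (2*α) * η ^ (-(γ/2)) with hRdef
  set H : ℝ → ℝ := fun x => (g η x) ^ 2 *
    Real.exp (-(b * (x - x₀) ^ 2 + (2/3) * R * (x - x₀) ^ 3)) with hHdef
  -- rewrite the integrand
  have hint : ∀ x : ℝ, ‖(g η x : ℂ) * Phi c α γ η x‖ ^ 2 = H x := by
    intro x
    have h1 : ‖((g η x : ℝ) : ℂ)‖ = |g η x| := by
      rw [Complex.norm_real, Real.norm_eq_abs]
    rw [norm_mul, mul_pow, normPhi_sq c α γ η hα' x, h1, _root_.sq_abs (g η x), hHdef]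
  have hIeq : (∫ x : ℝ, ‖(g η x : ℂ) * Phi c α γ η x‖ ^ 2) = ∫ x : ℝ, H x :=
    integral_congr_ae (Filter.Eventually.of_forall hint)
  -- exponent arithmetic
  have hAB : η ^ (-(γ/2)) * η ^ (γ/2) = 1 := by
    rw [← Real.rpow_add hη0]; simp
  have hcube : (η ^ (γ/6)) ^ 3 = η ^ (γ/2) := by
    rw [← Real.rpow_natCast (η ^ (γ/6)) 3, ← Real.rpow_mul hη0.le]
    congr 1; push_cast; ring
  have hsqr : (η ^ ((γ-1)/4)) ^ 2 = η ^ ((γ-1)/2) := by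
    rw [← Real.rpow_natCast (η ^ ((γ-1)/4)) 2, ← Real.rpow_mul hη0.le]
    congr 1; push_cast; ring
  have hprod : η ^ ((1-γ)/2) * η ^ ((γ-1)/2) = 1 := by
    rw [← Real.rpow_add hη0, show (1-γ)/2 + (γ-1)/2 = 0 by ring, Real.rpow_zero]
  have hmix : η ^ (-(γ/2)) * (η ^ ((γ-1)/4)) ^ 3 ≤ 1 := by
    rw [← Real.rpow_natCast (η ^ ((γ-1)/4)) 3, ← Real.rpow_mul hη0.le, ← Real.rpow_add hη0]
    apply Real.rpow_le_one_of_one_le_of_nonpos hη1.le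
    push_cast; linarith
  -- bounds on R
  have hR0 : 0 ≤ R := by
    apply mul_nonneg _ (Real.rpow_nonneg hη0.le _)
    apply div_nonneg _ (by linarith)
    nlinarith [mul_nonneg (mul_nonneg hre.le him.le) (Real.rpow_nonneg hη0.le (1-γ))]
  have hRle : R ≤ C0 * η ^ (-(γ/2)) := by
    apply mul_le_mul_of_nonneg_right _ (Real.rpow_nonneg hη0.le _)
    apply (div_le_div_iff_of_pos_right (by linarith : (0:ℝ) < 2*α)).mpr
    nlinarith [mul_nonneg (mul_nonneg hre.le him.le)
      (sub_nonneg.mpr (Real.rpow_le_one_of_one_le_of_nonpos hη1.le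
        (by linarith : (1:ℝ)-γ ≤ 0)))]
  -- pointwise upper bound
  set U : ℝ → ℝ := fun x => Real.exp K * Real.exp (-b * (x - x₀) ^ 2) with hUdef
  have hupper : ∀ x : ℝ, H x ≤ U x := by
    intro x
    by_cases hx : |x - x₀| ≤ 2 * η ^ (γ/6)
    · have hg2 : (g η x) ^ 2 ≤ 1 := by
        nlinarith [hg_le_one η hη0 x, hg_nonneg η hη0 x]
      have habs3 : |x - x₀| ^ 3 ≤ 8 * η ^ (γ/2) := by
        calc |x - x₀| ^ 3 ≤ (2 * η ^ (γ/6)) ^ 3 :=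
              pow_le_pow_left₀ (abs_nonneg _) hx 3
          _ = 8 * η ^ (γ/2) := by rw [mul_pow, hcube]; norm_num
      have hcub : |2/3 * R * (x - x₀) ^ 3| ≤ K := by
        rw [abs_mul, abs_mul, _root_.abs_pow]
        have h8 : 2/3 * R * |x - x₀| ^ 3 ≤ 2/3 * (C0 * η ^ (-(γ/2))) * (8 * η ^ (γ/2)) := by
          apply mul_le_mul (by nlinarith [abs_nonneg (x - x₀), pow_nonneg (abs_nonneg (x-x₀)) 3])
            habs3 (pow_nonneg (abs_nonneg _) 3) (by positivity)
        have h9 : 2/3 * (C0 * η ^ (-(γ/2))) * (8 * η ^ (γ/2)) = K := by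
          rw [hKdef]
          calc 2/3 * (C0 * η ^ (-(γ/2))) * (8 * η ^ (γ/2))
              = (16/3) * C0 * (η ^ (-(γ/2)) * η ^ (γ/2)) := by ring
            _ = 16/3 * C0 := by rw [hAB, mul_one]
        calc |2/3| * |R| * |x - x₀| ^ 3 = 2/3 * R * |x - x₀| ^ 3 := by
              rw [_root_.abs_of_nonneg hR0, _root_.abs_of_nonneg (by norm_num : (0:ℝ) ≤ 2/3)]
          _ ≤ K := h9 ▸ h8
      have hexp : Real.exp (-(b * (x - x₀) ^ 2 + 2/3 * R * (x - x₀) ^ 3))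
          ≤ Real.exp K * Real.exp (-b * (x - x₀) ^ 2) := by
        rw [← Real.exp_add]
        apply Real.exp_le_exp.mpr
        have := neg_abs_le (2/3 * R * (x - x₀) ^ 3)
        nlinarith [hcub]
      calc H x ≤ Real.exp (-(b * (x - x₀) ^ 2 + 2/3 * R * (x - x₀) ^ 3)) := by
            simp only [hHdef]
            have hEpos := Real.exp_pos (-(b * (x - x₀) ^ 2 + 2/3 * R * (x - x₀) ^ 3))
            nlinarith [hEpos, hg2, hg_nonneg η hη0 x]
        _ ≤ U x := hexp
    · have hg0 : g η x = 0 := hg_zero η hη0 x (lt_of_not_ge hx)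
      simp only [hHdef, hUdef, hg0]
      norm_num
      positivity
  -- integrability
  have hUint : Integrable U := by
    simp only [hUdef]
    exact ((integrable_exp_neg_mul_sq hb).comp_sub_right x₀).const_mul _
  have hHcont : Continuous H := by
    simp only [hHdef]
    apply Continuous.mul ((hg_smooth η hη0).continuous.pow 2)
    exact Real.continuous_exp.comp (by fun_prop)
  have hHnonneg : ∀ x : ℝ, 0 ≤ H x := by
    intro x
    simp only [hHdef]
    positivity
  have hHint : Integrable H := by
    apply hUint.mono' hHcont.aestronglyMeasurable
    apply Filter.Eventually.of_forall
    intro x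
    rw [Real.norm_eq_abs, _root_.abs_of_nonneg (hHnonneg x)]
    exact hupper x
  -- upper bound on the integral
  have hUval : (∫ x : ℝ, U x) = Real.exp K * Real.sqrt (Real.pi / b) := by
    simp only [hUdef]
    rw [integral_const_mul]
    congr 1
    rw [MeasureTheory.integral_sub_right_eq_self (fun u => Real.exp (-b * u ^ 2)) x₀]
    exact integral_gaussian b
  have hsqrtval : Real.sqrt (Real.pi / b) = Real.sqrt (Real.pi / c.im) * η ^ ((γ-1)/4) := by
    have h1 : Real.pi / b = (Real.pi / c.im) * η ^ ((γ-1)/2) := by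
      rw [hbdef]
      rw [show (1-γ)/2 = -((γ-1)/2) by ring, Real.rpow_neg hη0.le]
      have h2 : η ^ ((γ-1)/2) ≠ 0 := ne_of_gt (Real.rpow_pos_of_pos hη0 _)
      field_simp
    rw [h1, Real.sqrt_mul (by positivity), ← hsqr,
      Real.sqrt_sq (Real.rpow_nonneg hη0.le _)]
  have hUB : (∫ x : ℝ, H x) ≤ Real.exp K * Real.sqrt (Real.pi / c.im) * η ^ ((γ-1)/4) := by
    calc (∫ x : ℝ, H x) ≤ ∫ x : ℝ, U x := integral_mono hHint hUint hupper
      _ = Real.exp K * Real.sqrt (Real.pi / c.im) * η ^ ((γ-1)/4) := by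
        rw [hUval, hsqrtval, mul_assoc]
  -- lower bound
  set r : ℝ := η ^ ((γ-1)/4) with hrdef
  have hr0 : 0 < r := Real.rpow_pos_of_pos hη0 _
  have hrlt : r < η ^ (γ/6) := by
    rw [hrdef]
    exact Real.rpow_lt_rpow_of_exponent_lt hη1 (by linarith)
  have hlow : ∀ x ∈ Set.Icc (x₀ - r) (x₀ + r), Real.exp (-(c.im + K)) ≤ H x := by
    intro x hx
    have hxs : |x - x₀| ≤ r := abs_le.mpr ⟨by linarith [hx.1], by linarith [hx.2]⟩
    have hg1 : g η x = 1 := hg_one η hη0 x (lt_of_le_of_lt hxs hrlt)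
    have hquad : b * (x - x₀) ^ 2 ≤ c.im := by
      have h1 : (x - x₀) ^ 2 ≤ r ^ 2 := by
        rw [← _root_.sq_abs (x - x₀)]
        exact pow_le_pow_left₀ (abs_nonneg _) hxs 2
      have h2 : b * r ^ 2 = c.im := by
        rw [hbdef, hrdef, hsqr, mul_assoc, hprod, mul_one]
      nlinarith [hb]
    have hcub2 : 2/3 * R * (x - x₀) ^ 3 ≤ K := by
      have h3 : (x - x₀) ^ 3 ≤ |x - x₀| ^ 3 := by
        rw [← _root_.abs_pow]; exact le_abs_self _
      have h4 : |x - x₀| ^ 3 ≤ r ^ 3 := pow_le_pow_left₀ (abs_nonneg _) hxs 3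
      have h5 : 2/3 * R * (x - x₀) ^ 3 ≤ 2/3 * (C0 * η ^ (-(γ/2))) * r ^ 3 := by
        have : 2/3 * R * (x - x₀) ^ 3 ≤ 2/3 * R * r ^ 3 := by
          apply mul_le_mul_of_nonneg_left (le_trans h3 h4) (by positivity)
        apply le_trans this
        apply mul_le_mul_of_nonneg_right _ (by positivity)
        nlinarith [hRle]
      have h6 : 2/3 * (C0 * η ^ (-(γ/2))) * r ^ 3 ≤ 2/3 * C0 := by
        have h7 : η ^ (-(γ/2)) * r ^ 3 ≤ 1 := by rw [hrdef]; exact hmix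
        calc 2/3 * (C0 * η ^ (-(γ/2))) * r ^ 3 = 2/3 * C0 * (η ^ (-(γ/2)) * r ^ 3) := by ring
          _ ≤ 2/3 * C0 * 1 := by
            apply mul_le_mul_of_nonneg_left h7 (by positivity)
          _ = 2/3 * C0 := by ring
      have h8 : 2/3 * C0 ≤ K := by rw [hKdef]; nlinarith [hC0]
      linarith
    simp only [hHdef, hg1, one_pow, one_mul]
    apply Real.exp_le_exp.mpr
    linarith [hquad, hcub2]
  have hIcc : Real.exp (-(c.im + K)) * (2 * r) ≤ ∫ x in Set.Icc (x₀ - r) (x₀ + r), H x := by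
    have hvol : (volume (Set.Icc (x₀ - r) (x₀ + r))).toReal = 2 * r := by
      rw [Real.volume_Icc, ENNReal.toReal_ofReal (by linarith)]
      ring
    have := setIntegral_ge_of_const_le_real (measurableSet_Icc)
      (by rw [Real.volume_Icc]; exact ENNReal.ofReal_ne_top) hlow
      hHint.integrableOn
    rwa [measureReal_def, hvol] at this
  have hLB : 2 * Real.exp (-(c.im + K)) * r ≤ ∫ x : ℝ, H x := by
    calc 2 * Real.exp (-(c.im + K)) * r = Real.exp (-(c.im + K)) * (2 * r) := by ring
      _ ≤ ∫ x in Set.Icc (x₀ - r) (x₀ + r), H x := hIcc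
      _ ≤ ∫ x : ℝ, H x :=
          setIntegral_le_integral hHint (Filter.Eventually.of_forall hHnonneg)
  rw [hIeq]
  exact ⟨hLB, hUB⟩
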